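/- arXiv:2207.03250 — 5 statements merged into one kernel-verified Lean document; each statement's English description precedes it below -/
import Mathlib

section
/- For every positive integer $i$, $\sum_{k=1}^{\infty} \frac{H_{i+k}}{k(i+k)} = \frac{H_i^2 + H_i^{(2)}}{i}$. -/
open Real

noncomputable def H (n k : ℕ) : ℝ := ∑ i ∈ Finset.Icc 1 k, 1 / (i : ℝ) ^ n

noncomputable def h (n k : ℕ) : ℝ := ∑ i ∈ Finset.Icc 1 k, 1 / (2 * (i : ℝ) - 1) ^ n

noncomputable def zeta (s : ℕ) : ℝ := ∑' n : ℕ, 1 / ((n : ℝ) + 1) ^ s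

/-! Since `1 / (k (i + k)) = (1/i) (1/k - 1/(i + k))`, `i` times the tail of the series from `N`
has a closed form `R N` as a finite sum over `j ≤ i` (`scaledTail`). So the series telescopes to
`R 0 / i`, because `R N → 0` (as `H_M / M → 0` by Cesàro and `H_{N+j} - H_N → 0`), and
`R 0 = 2 ∑_{j ≤ i} H_j / j = H_i² + H_i^{(2)}`. -/

open Finset Filter Topology

lemma H_succ (n m : ℕ) : H n (m + 1) = H n m + 1 / ((m : ℝ) + 1) ^ n := by
  rw [H, H, sum_Icc_succ_top (by omega)]
  push_cast
  ring

lemma H_one_succ (m : ℕ) : H 1 (m + 1) = H 1 m + 1 / ((m : ℝ) + 1) := by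
  simpa using H_succ 1 m

lemma H_nonneg (n m : ℕ) : 0 ≤ H n m :=
  sum_nonneg fun _ _ => by positivity

lemma H_one_eq_sum_range (m : ℕ) : H 1 m = ∑ k ∈ range m, 1 / ((k : ℝ) + 1) := by
  induction m with
  | zero => simp [H]
  | succ m ih => rw [H_one_succ, ih, sum_range_succ]

lemma tendsto_H_one_div_atTop : Tendsto (fun m : ℕ => H 1 m / m) atTop (𝓝 0) := by
  refine tendsto_one_div_add_atTop_nhds_zero_nat.cesaro.congr fun m => ?_
  rw [H_one_eq_sum_range, div_eq_inv_mul]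

lemma tendsto_H_one_add_sub (j : ℕ) :
    Tendsto (fun N : ℕ => H 1 (N + j) - H 1 N) atTop (𝓝 0) := by
  induction j with
  | zero => simp
  | succ j ih =>
    have hstep := (tendsto_one_div_add_atTop_nhds_zero_nat (𝕜 := ℝ)).comp
      (tendsto_add_atTop_nat j)
    simpa [← add_assoc, H_one_succ, add_sub_right_comm] using ih.add hstep

noncomputable def scaledTail (i N : ℕ) : ℝ :=
  ∑ j ∈ Icc 1 i, (H 1 (N + j) / (N + j) + (H 1 (N + j) - H 1 N) / j)

lemma scaledTail_succ (i N : ℕ) :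
    scaledTail (i + 1) N = scaledTail i N +
      (H 1 (N + i + 1) / ((N : ℝ) + i + 1) + (H 1 (N + i + 1) - H 1 N) / ((i : ℝ) + 1)) := by
  rw [scaledTail, sum_Icc_succ_top (by omega), ← scaledTail, ← add_assoc]
  push_cast
  ring_nf

lemma scaledTail_zero (i : ℕ) : scaledTail i 0 = H 1 i ^ 2 + H 2 i := by
  have hH0 : H 1 0 = 0 := by simp [H]
  induction i with
  | zero => simp [scaledTail, H]
  | succ i ih =>
    rw [scaledTail_succ, ih]
    simp only [zero_add, hH0, Nat.cast_zero, H_one_succ, H_succ 2]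
    field_simp
    ring

lemma scaledTail_sub_succ (i N : ℕ) :
    scaledTail i N - scaledTail i (N + 1) =
      i * (H 1 (i + (N + 1)) / (((N : ℝ) + 1) * ((i : ℝ) + ((N : ℝ) + 1)))) := by
  induction i with
  | zero => simp [scaledTail]
  | succ i ih =>
    rw [scaledTail_succ, scaledTail_succ, add_sub_add_comm, ih,
      show i + (N + 1) = N + i + 1 by omega, show i + 1 + (N + 1) = N + i + 1 + 1 by omega,
      show N + 1 + i + 1 = N + i + 1 + 1 by omega, H_one_succ (N + i + 1), H_one_succ N]
    push_cast
    field_simp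
    ring

lemma tendsto_scaledTail (i : ℕ) : Tendsto (scaledTail i) atTop (𝓝 0) := by
  rw [show (0 : ℝ) = ∑ j ∈ Icc 1 i, (0 + 0 / (j : ℝ)) by simp]
  refine tendsto_finsetSum _ fun j _ => .add ?_ ((tendsto_H_one_add_sub j).div_const _)
  exact (tendsto_H_one_div_atTop.comp (tendsto_add_atTop_nat j)).congr fun N => by simp

theorem stmt2 (i : ℕ) (hi : 0 < i) :
    ∑' k : ℕ, H 1 (i + (k + 1)) / (((k : ℝ) + 1) * ((i : ℝ) + ((k : ℝ) + 1))) =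
      (H 1 i ^ 2 + H 2 i) / i := by
  have hi' : (i : ℝ) ≠ 0 := by exact_mod_cast hi.ne'
  have hterm (k : ℕ) : H 1 (i + (k + 1)) / (((k : ℝ) + 1) * ((i : ℝ) + ((k : ℝ) + 1))) =
      (scaledTail i k - scaledTail i (k + 1)) / i := by
    rw [scaledTail_sub_succ]
    field_simp
  have hpartial (N : ℕ) :
      ∑ k ∈ range N, H 1 (i + (k + 1)) / (((k : ℝ) + 1) * ((i : ℝ) + ((k : ℝ) + 1))) =
        (scaledTail i 0 - scaledTail i N) / i := by
    simp only [hterm, ← sum_div, sum_range_sub']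
  have hlim : Tendsto (fun N => (scaledTail i 0 - scaledTail i N) / i) atTop
      (𝓝 ((H 1 i ^ 2 + H 2 i) / i)) := by
    simpa [scaledTail_zero] using
      ((tendsto_scaledTail i).const_sub (scaledTail i 0)).div_const (i : ℝ)
  refine ((hasSum_iff_tendsto_nat_of_nonneg (fun k => ?_) _).mpr ?_).tsum_eq
  · exact div_nonneg (H_nonneg _ _) (by positivity)
  · simpa only [hpartial] using hlim
end

section
/- For every positive integer $i$, $\sum_{k=1}^{\infty} \frac{h_k}{(2k-1)(2i+2k-1)} = \frac{3\zeta(2)}{8i} + \frac{1}{4i}\sum_{k=1}^{i-1} \frac{h_k}{k}$. -/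
open Real

/-!
Write `c k = 1 / (2k + 1)`, so that `h 1 (k + 1) = ∑_{j ≤ k} c j` and the `k`-th term of the
series is `∑_{j ≤ k} c j * c k * c (k + i)`. All terms are nonnegative, so this triangular
double series may be summed over `k` first. By the partial fractions
`c k * c (k + i) = (c k - c (k + i)) / (2i)` the inner sums telescope to
`c j * ∑_{t < i} c (j + t) / (2i)`, and summing over `j` by the same telescoping gives
`∑_j c j * c (j + t) = h_t / (2t)` for `t > 0`, while `t = 0` contributes
`∑_j c j ^ 2 = π² / 8`.
-/

open Filter Topology Finset

theorem Antitone.hasSum_sub_succ {f : ℕ → ℝ} (hf : Antitone f)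
    (hlim : Tendsto f atTop (𝓝 0)) : HasSum (fun k => f k - f (k + 1)) (f 0) := by
  have hnonneg : ∀ k, 0 ≤ f k - f (k + 1) := fun k => sub_nonneg.2 (hf k.le_succ)
  rw [hasSum_iff_tendsto_nat_of_nonneg hnonneg]
  simp_rw [sum_range_sub']
  simpa using tendsto_const_nhds.sub hlim

theorem Antitone.hasSum_sub_add {f : ℕ → ℝ} (hf : Antitone f)
    (hlim : Tendsto f atTop (𝓝 0)) (i : ℕ) :
    HasSum (fun k => f k - f (k + i)) (∑ t ∈ range i, f t) := by
  -- `f k - f (k + i)` is the single step `g k - g (k + 1)` of the window sums `g`.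
  set g : ℕ → ℝ := fun k => ∑ t ∈ range i, f (k + t)
  have hg : Antitone g := fun a b hab => sum_le_sum fun t _ => hf (by omega)
  have hglim : Tendsto g atTop (𝓝 0) := by
    simpa using
      tendsto_finsetSum (range i) fun t _ => hlim.comp (tendsto_add_atTop_nat t)
  have hstep : ∀ k, g k - g (k + 1) = f k - f (k + i) := by
    intro k
    have hsplit := (sum_range_succ' (fun t => f (k + t)) i).symm.trans
      (sum_range_succ (fun t => f (k + t)) i)
    simp only [g, add_zero, add_assoc, add_comm 1] at hsplit ⊢
    linarith
  simpa [hstep, g] using Antitone.hasSum_sub_succ hg hglim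

theorem hasSum_sum_range_succ_of_nonneg {f : ℕ → ℕ → ℝ} (hf : ∀ j k, 0 ≤ f j k)
    {r : ℕ → ℝ} {a : ℝ} (hr : ∀ j, HasSum (fun m => f j (j + m)) (r j)) (ha : HasSum r a) :
    HasSum (fun k => ∑ j ∈ range (k + 1), f j k) a := by
  set G : ℕ × ℕ → ℝ := fun p => f p.1 (p.1 + p.2)
  have hG : Summable G := by
    refine (summable_prod_of_nonneg fun p => hf _ _).2 ⟨fun j => (hr j).summable, ?_⟩
    simpa only [G, (hr _).tsum_eq] using ha.summable
  have hGa : HasSum G a := (hG.hasSum.prod_fiberwise hr).unique ha ▸ hG.hasSum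
  have hdiag := (HasAntidiagonal.sigmaAntidiagonalEquivProd.hasSum_iff.2 hGa).sigma
    fun n => hasSum_fintype _
  refine hdiag.congr_fun fun k => ?_
  simp only [Function.comp_def, HasAntidiagonal.sigmaAntidiagonalEquivProd_apply]
  rw [sum_coe_sort (antidiagonal k) G, Nat.sum_antidiagonal_eq_sum_range_succ_mk]
  refine sum_congr rfl fun j hj => ?_
  rw [mem_range] at hj
  simp only [G, Nat.add_sub_cancel' (Nat.le_of_lt_succ hj)]

theorem Finset.sum_Icc_one_eq_sum_range {M : Type*} [AddCommMonoid M] (f : ℕ → M) (n : ℕ) :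
    ∑ k ∈ Icc 1 n, f k = ∑ k ∈ range n, f (k + 1) := by
  rw [← Ico_add_one_right_eq_Icc, sum_Ico_eq_sum_range, Nat.add_sub_cancel]
  simp_rw [add_comm 1]

noncomputable def oddRecip (k : ℕ) : ℝ := 1 / (2 * k + 1)

theorem oddRecip_nonneg (k : ℕ) : 0 ≤ oddRecip k := by
  unfold oddRecip; positivity

theorem antitone_oddRecip : Antitone oddRecip := fun m n hmn => by
  unfold oddRecip
  gcongr

theorem tendsto_oddRecip_atTop : Tendsto oddRecip atTop (𝓝 0) := by
  have : Tendsto (fun k : ℕ => 2 * (k : ℝ) + 1) atTop atTop :=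
    tendsto_atTop_add_const_right _ 1 (tendsto_natCast_atTop_atTop.const_mul_atTop two_pos)
  exact this.inv_tendsto_atTop.congr fun k => by simp [oddRecip]

theorem h_one_eq_sum_oddRecip (n : ℕ) : h 1 n = ∑ k ∈ range n, oddRecip k := by
  rw [h, sum_Icc_one_eq_sum_range]
  refine sum_congr rfl fun k _ => ?_
  simp only [oddRecip, pow_one]
  push_cast
  ring_nf

theorem hasSum_oddRecip_sq : HasSum (fun k => oddRecip k ^ 2) (π ^ 2 / 8) := by
  set f : ℕ → ℝ := fun n => 1 / (n : ℝ) ^ 2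
  have heven : HasSum (fun k => f (2 * k)) (π ^ 2 / 6 / 4) :=
    (hasSum_zeta_two.div_const 4).congr_fun fun k => by simp only [f]; push_cast; ring
  have hodd : HasSum (fun k => f (2 * k + 1)) (∑' k, f (2 * k + 1)) :=
    (hasSum_zeta_two.summable.comp_injective fun a b hab => by simpa using hab).hasSum
  have hval : ∑' k, f (2 * k + 1) = π ^ 2 / 8 := by
    linarith [hasSum_zeta_two.unique (heven.even_add_odd hodd)]
  rw [hval] at hodd
  exact hodd.congr_fun fun k => by simp [f, oddRecip]

theorem oddRecip_mul_oddRecip_add (j : ℕ) {t : ℕ} (ht : 0 < t) :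
    oddRecip j * oddRecip (j + t) = (oddRecip j - oddRecip (j + t)) / (2 * t) := by
  unfold oddRecip
  push_cast
  field_simp
  ring

theorem hasSum_oddRecip_mul_oddRecip_add (j : ℕ) {t : ℕ} (ht : 0 < t) :
    HasSum (fun k => oddRecip (j + k) * oddRecip (j + k + t))
      ((∑ s ∈ range t, oddRecip (j + s)) / (2 * t)) := by
  have htele := Antitone.hasSum_sub_add (f := fun k => oddRecip (j + k))
    (fun a b hab => antitone_oddRecip (by omega))
    (tendsto_oddRecip_atTop.comp (tendsto_add_atTop_nat j) |>.congr fun k => by simp [add_comm]) t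
  refine (htele.div_const (2 * t)).congr_fun fun k => ?_
  rw [oddRecip_mul_oddRecip_add _ ht, add_assoc]

theorem hasSum_oddRecip_mul_oddRecip_add_one (t : ℕ) :
    HasSum (fun j => oddRecip j * oddRecip (j + (t + 1))) (h 1 (t + 1) / ((t : ℝ) + 1) / 2) := by
  have h0 := hasSum_oddRecip_mul_oddRecip_add 0 t.succ_pos
  simp only [zero_add, ← h_one_eq_sum_oddRecip] at h0
  rwa [div_div, mul_comm, ← Nat.cast_add_one]

theorem hasSum_oddRecip_mul_sum_oddRecip_add (m : ℕ) :
    HasSum (fun j => oddRecip j * ∑ s ∈ range (m + 1), oddRecip (j + s))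
      (∑ t ∈ range m, h 1 (t + 1) / ((t : ℝ) + 1) / 2 + π ^ 2 / 8) := by
  refine ((hasSum_sum fun t _ => hasSum_oddRecip_mul_oddRecip_add_one t).add
    hasSum_oddRecip_sq).congr_fun fun j => ?_
  rw [sum_range_succ', mul_add, mul_sum]
  simp [sq]

theorem h_one_succ_div_eq_sum (i k : ℕ) :
    h 1 (k + 1) / ((2 * ((k : ℝ) + 1) - 1) * (2 * i + 2 * ((k : ℝ) + 1) - 1)) =
      ∑ j ∈ range (k + 1), oddRecip j * (oddRecip k * oddRecip (k + i)) := by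
  rw [h_one_eq_sum_oddRecip, ← sum_mul, div_eq_mul_one_div]
  congr 1
  simp only [oddRecip, one_div_mul_one_div]
  push_cast
  ring_nf

theorem stmt7 (i : ℕ) (hi : 0 < i) :
    ∑' k : ℕ, h 1 (k + 1) / ((2 * ((k : ℝ) + 1) - 1) * (2 * i + 2 * ((k : ℝ) + 1) - 1)) =
      3 * (π ^ 2 / 6) / (8 * i) + (1 / (4 * i)) * ∑ k ∈ Finset.Icc 1 (i - 1), h 1 k / k := by
  obtain ⟨m, rfl⟩ : ∃ m, i = m + 1 := ⟨i - 1, by omega⟩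
  have hnonneg : ∀ j k, 0 ≤ oddRecip j * (oddRecip k * oddRecip (k + (m + 1))) := fun j k =>
    mul_nonneg (oddRecip_nonneg j) (mul_nonneg (oddRecip_nonneg k) (oddRecip_nonneg _))
  have hrow : ∀ j, HasSum (fun n => oddRecip j * (oddRecip (j + n) * oddRecip (j + n + (m + 1))))
      ((oddRecip j * ∑ s ∈ range (m + 1), oddRecip (j + s)) / (2 * ↑(m + 1))) := fun j => by
    rw [mul_div_assoc]
    exact (hasSum_oddRecip_mul_oddRecip_add j m.succ_pos).mul_left _
  have hcol := (hasSum_oddRecip_mul_sum_oddRecip_add m).div_const (2 * ↑(m + 1))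
  rw [((hasSum_sum_range_succ_of_nonneg hnonneg hrow hcol).congr_fun
    (h_one_succ_div_eq_sum _)).tsum_eq, Nat.add_sub_cancel, sum_Icc_one_eq_sum_range, ← sum_div]
  push_cast
  field_simp
  ring
end

section
/- $\sum_{k=1}^{\infty} \frac{h_k}{(2k-1)(2k+1)} = \frac{3}{8}\zeta(2) = \frac{\pi^2}{16}$. -/
open Real

/-! Since `1 / ((2k-1)(2k+1)) = (1/(2k-1) - 1/(2k+1)) / 2` and `h_k - h_{k-1} = 1/(2k-1)`,
summation by parts turns the `n`-th partial sum into `(∑_{k ≤ n} 1/(2k-1)² - h_n/(2n+1)) / 2`.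
The boundary term vanishes because `h_n / n` is a Cesàro mean of a null sequence, and removing
the even terms from `ζ(2)` gives `∑ 1/(2k-1)² = (3/4) ζ(2) = π²/8`. -/

open Finset Filter Topology

lemma h_one_eq_sum_range (n : ℕ) : h 1 n = ∑ i ∈ range n, 1 / (2 * (i : ℝ) + 1) := by
  rw [h, ← Ico_add_one_right_eq_Icc, sum_Ico_eq_sum_range, Nat.add_sub_cancel]
  refine sum_congr rfl fun i _ => ?_
  push_cast
  ring

lemma h_one_succ (n : ℕ) : h 1 (n + 1) = h 1 n + 1 / (2 * n + 1) := by
  rw [h_one_eq_sum_range, h_one_eq_sum_range, sum_range_succ]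

lemma h_one_nonneg (n : ℕ) : 0 ≤ h 1 n := by
  rw [h_one_eq_sum_range]
  positivity

lemma tendsto_h_one_div_atTop :
    Tendsto (fun n : ℕ => h 1 n / (2 * n + 1)) atTop (𝓝 0) := by
  have hterm : Tendsto (fun i : ℕ => 1 / (2 * (i : ℝ) + 1)) atTop (𝓝 0) :=
    tendsto_const_nhds.div_atTop <| tendsto_atTop_add_const_right _ _ <|
      tendsto_natCast_atTop_atTop.const_mul_atTop two_pos
  refine squeeze_zero' (.of_forall fun n => by have := h_one_nonneg n; positivity)
    ((eventually_gt_atTop 0).mono fun n hn => ?_) hterm.cesaro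
  rw [← h_one_eq_sum_range, div_eq_inv_mul]
  have : (0 : ℝ) < n := Nat.cast_pos.mpr hn
  gcongr
  · exact h_one_nonneg n
  · linarith

lemma hasSum_one_div_odd_sq :
    HasSum (fun k : ℕ => 1 / (2 * (k : ℝ) + 1) ^ 2) (π ^ 2 / 8) := by
  have heven : HasSum (fun k : ℕ => 1 / ((2 * k : ℕ) : ℝ) ^ 2) (π ^ 2 / 6 / 4) := by
    have hterm (k : ℕ) : (1 : ℝ) / ((2 * k : ℕ) : ℝ) ^ 2 = 1 / (k : ℝ) ^ 2 / 4 := by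
      push_cast
      ring
    simpa only [hterm] using hasSum_zeta_two.div_const 4
  have hinj : Function.Injective fun k : ℕ => 2 * k + 1 := fun a b hab => by simpa using hab
  obtain ⟨s, hodd⟩ : Summable fun k : ℕ => (1 : ℝ) / ((2 * k + 1 : ℕ) : ℝ) ^ 2 :=
    hasSum_zeta_two.summable.comp_injective hinj
  obtain rfl : s = π ^ 2 / 8 := by
    have := (HasSum.even_add_odd (f := fun n : ℕ => (1 : ℝ) / (n : ℝ) ^ 2) heven hodd).unique
      hasSum_zeta_two
    linarith
  simpa using hodd

lemma h_one_succ_div_eq (k : ℕ) :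
    h 1 (k + 1) / ((2 * k + 1) * (2 * k + 3)) =
      (1 / (2 * (k : ℝ) + 1) ^ 2 +
        (h 1 k / (2 * k + 1) - h 1 (k + 1) / (2 * (k + 1 : ℕ) + 1))) / 2 := by
  rw [h_one_succ]
  push_cast
  field_simp
  ring

lemma hasSum_h_one_div :
    HasSum (fun k : ℕ => h 1 (k + 1) / ((2 * k + 1) * (2 * k + 3))) (π ^ 2 / 16) := by
  have hnonneg (k : ℕ) : 0 ≤ h 1 (k + 1) / ((2 * k + 1) * (2 * k + 3)) := by
    have := h_one_nonneg (k + 1)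
    positivity
  refine (hasSum_iff_tendsto_nat_of_nonneg hnonneg _).mpr ?_
  simp only [h_one_succ_div_eq, ← sum_div, sum_add_distrib,
    sum_range_sub' fun n : ℕ => h 1 n / (2 * (n : ℝ) + 1)]
  have hlim := (hasSum_one_div_odd_sq.tendsto_sum_nat.add
    (tendsto_h_one_div_atTop.const_sub (h 1 0 / (2 * ((0 : ℕ) : ℝ) + 1)))).div_const 2
  convert hlim using 2
  simp [h]
  ring

theorem stmt8 :
    (∑' k : ℕ, h 1 (k + 1) / ((2 * ((k : ℝ) + 1) - 1) * (2 * ((k : ℝ) + 1) + 1)) = 3 / 8 * (π ^ 2 / 6)) ∧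
    (∑' k : ℕ, h 1 (k + 1) / ((2 * ((k : ℝ) + 1) - 1) * (2 * ((k : ℝ) + 1) + 1)) = π ^ 2 / 16) := by
  have hsum : ∑' k : ℕ, h 1 (k + 1) / ((2 * ((k : ℝ) + 1) - 1) * (2 * ((k : ℝ) + 1) + 1))
      = π ^ 2 / 16 := by
    rw [← hasSum_h_one_div.tsum_eq]
    congr with k
    ring_nf
  exact ⟨by rw [hsum]; ring, hsum⟩
end

section
/- $\sum_{k=1}^{\infty} \frac{h_k^{(2)}}{(2k-1)^2} = \frac{75}{64}\zeta(4)$. -/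
open Real

/-!
With `a k = 1 / (2k+1)²`, the series is `∑_{i ≤ k} a i * a k`, half of `(∑ a)² + ∑ a²`, since the
square of a partial sum telescopes into exactly these terms. Removing the even terms from `ζ(2)` and
`ζ(4)` gives `∑ a = (3/4) ζ(2) = π²/8` and `∑ a² = (15/16) ζ(4) = π⁴/96`.
-/

open Finset

theorem HasSum.odd_of_even {G : Type*} [AddCommGroup G] [UniformSpace G] [IsUniformAddGroup G]
    [CompleteSpace G] [T2Space G] {f : ℕ → G} {c e : G} (hf : HasSum f c)
    (he : HasSum (fun k ↦ f (2 * k)) e) : HasSum (fun k ↦ f (2 * k + 1)) (c - e) := by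
  have hodd : Function.Injective fun k : ℕ ↦ 2 * k + 1 := fun m n hmn ↦ by
    dsimp only at hmn; omega
  have ho := (hf.summable.comp_injective hodd).hasSum
  rwa [← (he.even_add_odd ho).unique hf, add_sub_cancel_left]

theorem hasSum_one_div_odd_pow {n : ℕ} {z : ℝ} (hz : HasSum (fun k : ℕ ↦ 1 / (k : ℝ) ^ n) z) :
    HasSum (fun k : ℕ ↦ 1 / (2 * (k : ℝ) + 1) ^ n) ((1 - 1 / 2 ^ n) * z) := by
  have he : HasSum (fun k : ℕ ↦ 1 / ((2 * k : ℕ) : ℝ) ^ n) (1 / 2 ^ n * z) := by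
    have hterm (k : ℕ) : 1 / ((2 * k : ℕ) : ℝ) ^ n = 1 / 2 ^ n * (1 / (k : ℝ) ^ n) := by
      rw [one_div_mul_one_div, Nat.cast_mul, Nat.cast_two, mul_pow]
    simpa only [hterm] using hz.mul_left (1 / 2 ^ n)
  simpa only [sub_mul, one_mul, Nat.cast_add, Nat.cast_mul, Nat.cast_ofNat, Nat.cast_one]
    using hz.odd_of_even he

theorem sq_sum_range_eq {R : Type*} [CommRing R] (a : ℕ → R) (N : ℕ) :
    (∑ i ∈ range N, a i) ^ 2 = ∑ k ∈ range N, (2 * (a k * ∑ i ∈ range (k + 1), a i) - a k ^ 2) := by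
  induction N with
  | zero => simp
  | succ N ih =>
    rw [sum_range_succ (fun k ↦ 2 * (a k * ∑ i ∈ range (k + 1), a i) - a k ^ 2), ← ih,
      sum_range_succ]
    ring

theorem HasSum.mul_sum_range_succ {a : ℕ → ℝ} {s t : ℝ} (hs : HasSum a s)
    (ht : HasSum (fun k ↦ a k ^ 2) t) :
    HasSum (fun k ↦ a k * ∑ i ∈ range (k + 1), a i) ((s ^ 2 + t) / 2) := by
  have habs := hs.summable.abs
  have hsum : Summable (fun k ↦ a k * ∑ i ∈ range (k + 1), a i) := by
    refine (habs.mul_right (∑' i, |a i|)).of_norm_bounded fun k ↦ ?_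
    rw [norm_mul, Real.norm_eq_abs]
    gcongr
    exact (norm_sum_le _ _).trans (habs.sum_le_tsum _ fun i _ ↦ abs_nonneg _)
  obtain ⟨u, hu⟩ := hsum
  have hlim : Filter.Tendsto (fun N ↦ (∑ i ∈ range N, a i) ^ 2) Filter.atTop
      (nhds (2 * u - t)) := by
    simpa only [sq_sum_range_eq] using ((hu.mul_left 2).sub ht).tendsto_sum_nat
  have hu' : u = (s ^ 2 + t) / 2 := by
    linarith [tendsto_nhds_unique hlim (hs.tendsto_sum_nat.pow 2)]
  rwa [← hu']

theorem h_succ_eq_sum_range (n k : ℕ) :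
    h n (k + 1) = ∑ i ∈ range (k + 1), 1 / (2 * (i : ℝ) + 1) ^ n := by
  rw [h, ← Ico_add_one_right_eq_Icc, sum_Ico_eq_sum_range]
  refine sum_congr rfl fun i _ ↦ ?_
  push_cast
  ring_nf

theorem zeta_four : zeta 4 = π ^ 4 / 90 := by
  have := (hasSum_nat_add_iff' 1).mpr hasSum_zeta_four
  simpa [zeta] using this.tsum_eq

theorem stmt9 :
    ∑' k : ℕ, h 2 (k + 1) / (2 * ((k : ℝ) + 1) - 1) ^ 2 = 75 / 64 * zeta 4 := by
  set a : ℕ → ℝ := fun k ↦ 1 / (2 * (k : ℝ) + 1) ^ 2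
  have ha : HasSum a (π ^ 2 / 8) := by
    convert hasSum_one_div_odd_pow hasSum_zeta_two using 1; ring
  have ha_sq : HasSum (fun k ↦ a k ^ 2) (π ^ 4 / 96) := by
    convert hasSum_one_div_odd_pow hasSum_zeta_four using 1
    · ext k; simp only [a, div_pow, one_pow, ← pow_mul]
    · ring
  have hterm (k : ℕ) :
      h 2 (k + 1) / (2 * ((k : ℝ) + 1) - 1) ^ 2 = a k * ∑ i ∈ range (k + 1), a i := by
    rw [h_succ_eq_sum_range, show 2 * ((k : ℝ) + 1) - 1 = 2 * k + 1 by ring, div_eq_mul_one_div,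
      mul_comm]
  rw [funext hterm, (ha.mul_sum_range_succ ha_sq).tsum_eq, zeta_four]
  ring
end

section
/- $\sum_{k=1}^{\infty} \frac{h_k^{(4)}}{(2k-1)^4} = \frac{1035}{1024}\zeta(8)$. -/
open Real

/-!
Put `a j = 1 / (2j + 1)^4`. Summing `(a 0 + ⋯ + a k) * a k` over `k` counts each off-diagonal
product `a i * a j` once and each square twice, so the series equals `((∑ a)^2 + ∑ a^2) / 2`.
Removing the even terms from `ζ(4) = π^4/90` and `ζ(8) = π^8/9450` gives `∑ a = π^4/96` and
`∑ a^2 = (255/256) ζ(8)`, and `(π^4/96)^2 = (525/512) ζ(8)`.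
-/

open Finset

theorem bernoulli'_six : bernoulli' 6 = 1 / 42 := by
  rw [bernoulli'_def]
  norm_num [sum_range_succ, bernoulli'_eq_zero_of_odd (by decide : Odd 5), Nat.choose]

theorem bernoulli'_eight : bernoulli' 8 = -1 / 30 := by
  rw [bernoulli'_def]
  norm_num [sum_range_succ, bernoulli'_six, bernoulli'_eq_zero_of_odd (by decide : Odd 5),
    bernoulli'_eq_zero_of_odd (by decide : Odd 7), Nat.choose]

theorem hasSum_zeta_eight : HasSum (fun n : ℕ ↦ 1 / (n : ℝ) ^ 8) (π ^ 8 / 9450) := by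
  convert hasSum_zeta_nat (k := 4) (by norm_num) using 1
  rw [bernoulli_eq_bernoulli'_of_ne_one (by decide), bernoulli'_eight]
  norm_num [Nat.factorial]
  ring

theorem HasSum.odd_of_even_s11 {α : Type*} [AddCommGroup α] [TopologicalSpace α]
    [IsTopologicalAddGroup α] {f : ℕ → α} {a b : α} (hf : HasSum f a)
    (he : HasSum (fun k ↦ f (2 * k)) b) : HasSum (fun k ↦ f (2 * k + 1)) (a - b) := by
  have heven := mul_right_injective₀ (two_ne_zero' ℕ)
  have hodd : Function.Injective (fun k : ℕ ↦ 2 * k + 1) := (add_left_injective 1).comp heven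
  have hrange : Set.range (fun k : ℕ ↦ 2 * k + 1) = (Set.range (2 * ·))ᶜ :=
    Set.ext fun n ↦ by simp
  refine (hodd.hasSum_range_iff (f := f)).1 ?_
  rw [hrange]
  exact ((heven.hasSum_range_iff.2 he).hasSum_iff_compl).1 hf

theorem two_mul_sum_range_sum_range_succ_mul {R : Type*} [CommSemiring R] (a : ℕ → R)
    (n : ℕ) :
    2 * ∑ k ∈ range n, (∑ j ∈ range (k + 1), a j) * a k =
      (∑ k ∈ range n, a k) ^ 2 + ∑ k ∈ range n, a k ^ 2 := by
  induction n with
  | zero => simp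
  | succ n ih =>
    simp only [sum_range_succ _ n, mul_add, ih]
    ring

theorem hasSum_one_div_two_mul_add_one_pow {p : ℕ} {a : ℝ}
    (h : HasSum (fun n : ℕ ↦ 1 / (n : ℝ) ^ p) a) :
    HasSum (fun n : ℕ ↦ 1 / (2 * n + 1 : ℝ) ^ p) ((1 - 1 / 2 ^ p) * a) := by
  have heven : HasSum (fun n : ℕ ↦ 1 / ((2 * n : ℕ) : ℝ) ^ p) (1 / 2 ^ p * a) := by
    have hterm (n : ℕ) : 1 / ((2 * n : ℕ) : ℝ) ^ p = 1 / 2 ^ p * (1 / (n : ℝ) ^ p) := by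
      push_cast
      rw [mul_pow, one_div_mul_one_div]
    simpa only [hterm] using h.mul_left (1 / 2 ^ p)
  have hodd := h.odd_of_even_s11 heven
  push_cast at hodd
  rwa [one_sub_mul]

theorem HasSum.sum_range_succ_mul {a : ℕ → ℝ} {A B : ℝ} (hA : HasSum a A)
    (hB : HasSum (fun k ↦ a k ^ 2) B) :
    HasSum (fun k ↦ (∑ j ∈ range (k + 1), a j) * a k) ((A ^ 2 + B) / 2) := by
  -- Absolute summability of `a` makes the series converge, so partial sums identify its value.
  have hbound (k : ℕ) :
      ‖(∑ j ∈ range (k + 1), a j) * a k‖ ≤ (∑' j, |a j|) * |a k| := by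
    rw [norm_mul, Real.norm_eq_abs, Real.norm_eq_abs]
    gcongr
    exact (abs_sum_le_sum_abs _ _).trans (hA.summable.abs.sum_le_tsum _ fun j _ ↦ abs_nonneg _)
  have hsum := Summable.of_norm_bounded (hA.summable.abs.mul_left _) hbound
  rw [hsum.hasSum_iff_tendsto_nat]
  have hlim := ((hA.tendsto_sum_nat.pow 2).add hB.tendsto_sum_nat).div_const 2
  refine hlim.congr fun n ↦ ?_
  rw [← two_mul_sum_range_sum_range_succ_mul]
  ring

theorem zeta_eq_of_hasSum {s : ℕ} (hs : s ≠ 0) {a : ℝ}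
    (h : HasSum (fun n : ℕ ↦ 1 / (n : ℝ) ^ s) a) : zeta s = a := by
  have := (hasSum_nat_add_iff' 1).2 h
  simp only [sum_range_one, Nat.cast_zero, zero_pow hs, div_zero, sub_zero, Nat.cast_add,
    Nat.cast_one] at this
  exact this.tsum_eq

theorem h_eq_sum_range (n k : ℕ) : h n k = ∑ j ∈ range k, 1 / (2 * (j : ℝ) + 1) ^ n := by
  rw [h, ← Ico_add_one_right_eq_Icc, sum_Ico_eq_sum_range, Nat.add_sub_cancel]
  refine sum_congr rfl fun j _ ↦ ?_
  push_cast
  ring_nf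

theorem stmt11 :
    ∑' k : ℕ, h 4 (k + 1) / (2 * ((k : ℝ) + 1) - 1) ^ 4 = 1035 / 1024 * zeta 8 := by
  have h4 := hasSum_one_div_two_mul_add_one_pow hasSum_zeta_four
  have h8 : HasSum (fun k : ℕ ↦ (1 / (2 * k + 1 : ℝ) ^ 4) ^ 2)
      ((1 - 1 / 2 ^ 8) * (π ^ 8 / 9450)) := by
    simpa only [div_pow, one_pow, ← pow_mul] using
      hasSum_one_div_two_mul_add_one_pow hasSum_zeta_eight
  have hterm : (fun k : ℕ ↦ h 4 (k + 1) / (2 * ((k : ℝ) + 1) - 1) ^ 4) = fun k ↦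
      (∑ j ∈ range (k + 1), 1 / (2 * (j : ℝ) + 1) ^ 4) * (1 / (2 * k + 1 : ℝ) ^ 4) := by
    funext k
    rw [h_eq_sum_range]
    ring
  rw [hterm, (h4.sum_range_succ_mul h8).tsum_eq,
    zeta_eq_of_hasSum (by norm_num) hasSum_zeta_eight]
  ring
end
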